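/- Let g, h : A* → Σ* be marked morphisms such that the set of minimal elements of the coincidence set I(g,h) is exactly i(g,h) = {(e,f), (e',f')} with (e,f) ≠ (e',f'). Define the successor morphisms g₁, h₁ : A* → A* by g₁(a) = e, g₁(b) = e', h₁(a) = f, h₁(b) = f'. Then g₁ and h₁ are marked, and for every w ∈ E(g,h) there is a unique word w₁ ∈ A* such that g₁(w₁) = h₁(w₁) = w (in particular w₁ ∈ E(g₁,h₁)). -/

import Mathlib

/-!
For a marked morphism, the longest common prefix of `g u` and `g u'` is the image of the longest
common prefix of `u` and `u'`. Applying this on both sides of two minimal coincidences `(u, v)`,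
`(u', v')` shows that their longest common prefixes `(p, q)` again form a coincidence; if `u` and
`u'` start with the same letter, `p` is nonempty and minimality forces `(u, v) = (p, q) = (u', v')`.
So the two minimal coincidences start with different letters on both sides: the successor
morphisms are marked, hence injective. Lifts exist because every coincidence `(w, w)` factors
into minimal ones.
-/

/-- The two-letter alphabet `A = {a, b}`. -/
inductive Ltr : Type
  | a : Ltr
  | b : Ltr
  deriving DecidableEq

/-- Apply a morphism (given by the images of the letters) to a word. -/
def mapp {α σ : Type*} (g : α → List σ) (w : List α) : List σ :=
  (w.map g).flatten

/-- The `n`-th power `tⁿ` of a word `t`. -/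
def npow {σ : Type*} (t : List σ) (n : ℕ) : List σ :=
  (List.replicate n t).flatten

/-- A binary morphism is periodic if all images of letters are powers of a common word. -/
def Periodic {σ : Type*} (g : Ltr → List σ) : Prop :=
  ∃ t : List σ, ∀ x : Ltr, ∃ n : ℕ, g x = npow t n

/-- The equality set `E(g,h)`. -/
def EqSet {σ : Type*} (g h : Ltr → List σ) : Set (List Ltr) :=
  {u | mapp g u = mapp h u}

/-- `u` is a minimal element of `E(g,h)`: nonempty, in `E(g,h)`, and not a product of two
nonempty elements of `E(g,h)`. -/
def MinEl {σ : Type*} (g h : Ltr → List σ) (u : List Ltr) : Prop :=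
  u ≠ [] ∧ u ∈ EqSet g h ∧
    ∀ v w : List Ltr, v ≠ [] → w ≠ [] → v ∈ EqSet g h → w ∈ EqSet g h → u ≠ v ++ w

/-- The submonoid of the free monoid generated by a set `S` of words. -/
def gen {α : Type*} (S : Set (List α)) : Set (List α) :=
  {u | ∃ l : List (List α), (∀ v ∈ l, v ∈ S) ∧ u = l.flatten}

/-- A binary morphism is marked if the images of the two letters are nonempty and
begin with different letters. -/
def Marked {σ : Type*} (g : Ltr → List σ) : Prop :=
  g Ltr.a ≠ [] ∧ g Ltr.b ≠ [] ∧ (g Ltr.a).head? ≠ (g Ltr.b).head?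

open Classical in
/-- Longest common prefix of two words. -/
noncomputable def lcp {σ : Type*} : List σ → List σ → List σ
  | x :: xs, y :: ys => if x = y then x :: lcp xs ys else []
  | _, _ => []

/-- `z_h`: the longest common prefix of `h(ab)` and `h(ba)`. -/
noncomputable def zh {σ : Type*} (h : Ltr → List σ) : List σ :=
  lcp (h Ltr.a ++ h Ltr.b) (h Ltr.b ++ h Ltr.a)

/-- `z̄_h`: the longest common suffix of `h(ab)` and `h(ba)`. -/
noncomputable def zbar {σ : Type*} (h : Ltr → List σ) : List σ :=
  (lcp (h Ltr.a ++ h Ltr.b).reverse ((h Ltr.b ++ h Ltr.a).reverse)).reverse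

/-- Componentwise concatenation in `Δ* × Δ*`. -/
def pprod {α : Type*} (p q : List α × List α) : List α × List α :=
  (p.1 ++ q.1, p.2 ++ q.2)

/-- The coincidence set `I(g,h) = {(u,v) | g(u) = h(v)}`. -/
def CoinSet {α σ : Type*} (g h : α → List σ) : Set (List α × List α) :=
  {p | mapp g p.1 = mapp h p.2}

/-- Minimal elements of the coincidence set: elements other than `(ε,ε)` that are not
a product of two elements of `I(g,h) \ {(ε,ε)}`. -/
def MinCoin {α σ : Type*} (g h : α → List σ) (p : List α × List α) : Prop :=
  p ≠ ([], []) ∧ p ∈ CoinSet g h ∧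
    ¬ ∃ q r : List α × List α, q ≠ ([], []) ∧ r ≠ ([], []) ∧
      q ∈ CoinSet g h ∧ r ∈ CoinSet g h ∧ p = pprod q r

/-- `(e,f)` is a block of `(g,h)`: nonempty words with `z_h·g(e) = h(f)·z_h`, minimal
with this property. -/
def MinBlock {σ : Type*} (g h : Ltr → List σ) (e f : List Ltr) : Prop :=
  e ≠ [] ∧ f ≠ [] ∧ zh h ++ mapp g e = mapp h f ++ zh h ∧
    ∀ u v : List Ltr, u <+: e → v <+: f →
      zh h ++ mapp g u = mapp h v ++ zh h → (u = [] ∧ v = []) ∨ (u = e ∧ v = f)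

/-- `e` is a nonempty word with `z_h·g(e) = h(e)·z_h`, minimal with this property. -/
def MinEqBlock {σ : Type*} (g h : Ltr → List σ) (e : List Ltr) : Prop :=
  e ≠ [] ∧ zh h ++ mapp g e = mapp h e ++ zh h ∧
    ∀ e₁ : List Ltr, e₁ <+: e → zh h ++ mapp g e₁ = mapp h e₁ ++ zh h →
      e₁ = [] ∨ e₁ = e

/-- The binary morphism sending `a ↦ x` and `b ↦ y`. -/
def two {σ : Type*} (x y : List σ) : Ltr → List σ
  | Ltr.a => x
  | Ltr.b => y

/-- A counterexample: the minimal generating set of `E(g,h)` has at least two elements,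
`g` is marked, `h` is not marked, `|g(a)| > |h(a)|` and `|g(b)| < |h(b)|`. -/
def Counterexample {σ : Type*} (g h : Ltr → List σ) : Prop :=
  (∃ α β : List Ltr, MinEl g h α ∧ MinEl g h β ∧ α ≠ β) ∧
  Marked g ∧ ¬ Marked h ∧
  (h Ltr.a).length < (g Ltr.a).length ∧ (g Ltr.b).length < (h Ltr.b).length

section Morphisms

variable {α σ : Type*}

@[simp]
theorem mapp_nil (g : α → List σ) : mapp g [] = [] := rfl

@[simp]
theorem mapp_cons (g : α → List σ) (x : α) (u : List α) :
    mapp g (x :: u) = g x ++ mapp g u := by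
  simp [mapp]

@[simp]
theorem mapp_append (g : α → List σ) (u v : List α) :
    mapp g (u ++ v) = mapp g u ++ mapp g v := by
  simp [mapp]

theorem mapp_isPrefix_mapp_append (g : α → List σ) (u v : List α) :
    mapp g u <+: mapp g (u ++ v) := by
  rw [mapp_append]
  exact List.prefix_append _ _

theorem List.IsPrefix.head?_eq {l₁ l₂ : List α} (h : l₁ <+: l₂) (hne : l₁ ≠ []) :
    l₁.head? = l₂.head? := by
  obtain ⟨t, rfl⟩ := h
  cases l₁ with
  | nil => exact absurd rfl hne
  | cons _ _ => rfl

theorem List.exists_longest_common_prefix :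
    ∀ u u' : List α, ∃ p s s', u = p ++ s ∧ u' = p ++ s' ∧
      (s.head? = s'.head? → s = [] ∧ s' = [])
  | x :: u, y :: u' => by
    by_cases hxy : x = y
    · subst hxy
      obtain ⟨p, s, s', rfl, rfl, hdiv⟩ := exists_longest_common_prefix u u'
      exact ⟨x :: p, s, s', rfl, rfl, hdiv⟩
    · exact ⟨[], x :: u, y :: u', rfl, rfl, fun h => absurd (Option.some.inj h) hxy⟩
  | [], u' => ⟨[], [], u', rfl, rfl, fun h => ⟨rfl, List.head?_eq_none_iff.mp h.symm⟩⟩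
  | u, [] => ⟨[], u, [], rfl, rfl, fun h => ⟨List.head?_eq_none_iff.mp h, rfl⟩⟩

end Morphisms

section Coincidence

variable {α σ : Type*} {g h : α → List σ}

theorem MinCoin.swap {p : List α × List α} (hp : MinCoin g h p) : MinCoin h g p.swap := by
  obtain ⟨hne, hmem, hirr⟩ := hp
  refine ⟨fun h0 => hne (by simpa using congrArg Prod.swap h0), hmem.symm, ?_⟩
  rintro ⟨q, r, hq, hr, hqc, hrc, hqr⟩
  refine hirr ⟨q.swap, r.swap, ?_, ?_, hqc.symm, hrc.symm, ?_⟩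
  · simpa [Prod.ext_iff, and_comm] using hq
  · simpa [Prod.ext_iff, and_comm] using hr
  · simpa [Prod.ext_iff, pprod, and_comm] using hqr

theorem MinCoin.eq_nil_of_prefix {p s q t : List α} (hm : MinCoin g h (p ++ s, q ++ t))
    (hpq : mapp g p = mapp h q) (hp : p ≠ []) : s = [] ∧ t = [] := by
  by_contra hst
  have hst' : mapp g s = mapp h t := by
    have hc : mapp g (p ++ s) = mapp h (q ++ t) := hm.2.1
    rwa [mapp_append, mapp_append, hpq, List.append_cancel_left_eq] at hc
  exact hm.2.2 ⟨(p, q), (s, t), by simp [hp], by simpa using hst, hpq, hst', rfl⟩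

theorem exists_lift_of_minCoin {β : Type*} {φ ψ : β → List α}
    (hmin : ∀ p, MinCoin g h p → ∃ x, p = (φ x, ψ x)) :
    ∀ p ∈ CoinSet g h, ∃ w, p = (mapp φ w, mapp ψ w) := by
  intro p hp
  induction hn : p.1.length + p.2.length using Nat.strong_induction_on generalizing p with
  | _ n ih =>
  by_cases h0 : p = ([], [])
  · exact ⟨[], by simp [h0]⟩
  by_cases hm : MinCoin g h p
  · obtain ⟨x, rfl⟩ := hmin p hm
    exact ⟨[x], by simp⟩
  obtain ⟨q, r, hq, hr, hqc, hrc, rfl⟩ : ∃ q r : List α × List α, q ≠ ([], []) ∧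
      r ≠ ([], []) ∧ q ∈ CoinSet g h ∧ r ∈ CoinSet g h ∧ p = pprod q r := by
    by_contra hc
    exact hm ⟨h0, hp, hc⟩
  have hq' : 0 < q.1.length + q.2.length := by
    rcases q with ⟨_ | _, _ | _⟩ <;> simp_all
  have hr' : 0 < r.1.length + r.2.length := by
    rcases r with ⟨_ | _, _ | _⟩ <;> simp_all
  simp only [pprod, List.length_append] at hn
  obtain ⟨u, hu⟩ := ih _ (by omega) q hqc rfl
  obtain ⟨v, hv⟩ := ih _ (by omega) r hrc rfl
  exact ⟨u ++ v, by simp [pprod, hu, hv]⟩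

end Coincidence

section Marked

variable {σ : Type*} {g : Ltr → List σ}

theorem Marked.ne_nil (hg : Marked g) : ∀ x, g x ≠ []
  | .a => hg.1
  | .b => hg.2.1

theorem Marked.mapp_eq_nil_iff (hg : Marked g) {u : List Ltr} : mapp g u = [] ↔ u = [] := by
  cases u with
  | nil => simp
  | cons x u => simp [hg.ne_nil x]

theorem Marked.head?_injective (hg : Marked g) : ∀ {x y}, (g x).head? = (g y).head? → x = y
  | .a, .a, _ | .b, .b, _ => rfl
  | .a, .b, h => absurd h hg.2.2
  | .b, .a, h => absurd h.symm hg.2.2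

theorem Marked.head?_mapp_cons (hg : Marked g) (x : Ltr) (u : List Ltr) :
    (mapp g (x :: u)).head? = (g x).head? :=
  ((List.prefix_append _ _).head?_eq (hg.ne_nil x)).symm

theorem Marked.head?_eq_of_head?_mapp_eq (hg : Marked g) {u u' : List Ltr}
    (h : (mapp g u).head? = (mapp g u').head?) : u.head? = u'.head? := by
  cases u with
  | nil => cases u' with
    | nil => rfl
    | cons y u' =>
      rw [mapp_nil, hg.head?_mapp_cons] at h
      exact absurd (List.head?_eq_none_iff.mp h.symm) (hg.ne_nil y)
  | cons x u => cases u' with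
    | nil =>
      rw [mapp_nil, hg.head?_mapp_cons] at h
      exact absurd (List.head?_eq_none_iff.mp h) (hg.ne_nil x)
    | cons y u' =>
      rw [hg.head?_mapp_cons, hg.head?_mapp_cons] at h
      simp [hg.head?_injective h]

theorem Marked.isPrefix_mapp_of_common_prefix (hg : Marked g) {p s s' : List Ltr}
    (hdiv : s.head? = s'.head? → s = [] ∧ s' = []) {w : List σ}
    (h : w <+: mapp g (p ++ s)) (h' : w <+: mapp g (p ++ s')) : w <+: mapp g p := by
  rw [mapp_append] at h h'
  by_contra hw
  obtain ⟨w', rfl⟩ : mapp g p <+: w :=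
    (List.prefix_or_prefix_of_prefix (List.prefix_append _ _) h).resolve_right hw
  rw [List.prefix_append_right_inj] at h h'
  have hw' : w' ≠ [] := by
    rintro rfl
    simp at hw
  have hs : s = [] := (hdiv (hg.head?_eq_of_head?_mapp_eq
    ((h.head?_eq hw').symm.trans (h'.head?_eq hw')))).1
  subst hs
  exact hw' (List.eq_nil_of_prefix_nil h)

theorem Marked.injective_mapp (hg : Marked g) : Function.Injective (mapp g) := by
  intro u u' h
  obtain ⟨p, s, s', rfl, rfl, hdiv⟩ := List.exists_longest_common_prefix u u'
  have hu : mapp g (p ++ s) <+: mapp g (p ++ s') := by rw [h]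
  have hu' : mapp g (p ++ s') <+: mapp g (p ++ s) := by rw [h]
  have hle := (hg.isPrefix_mapp_of_common_prefix hdiv (List.prefix_refl _) hu).length_le
  have hle' := (hg.isPrefix_mapp_of_common_prefix (fun h => (hdiv h.symm).symm)
    (List.prefix_refl _) hu').length_le
  simp only [mapp_append, List.length_append] at hle hle'
  have hs : s = [] := hg.mapp_eq_nil_iff.mp (List.eq_nil_of_length_eq_zero (by omega))
  have hs' : s' = [] := hg.mapp_eq_nil_iff.mp (List.eq_nil_of_length_eq_zero (by omega))
  rw [hs, hs']

theorem MinCoin.fst_ne_nil {h : Ltr → List σ} {u v : List Ltr} (hm : MinCoin g h (u, v))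
    (hh : Marked h) : u ≠ [] := by
  rintro rfl
  have hv : mapp h v = [] := hm.2.1.symm
  exact hm.1 (by rw [hh.mapp_eq_nil_iff.mp hv])

theorem MinCoin.snd_ne_nil {h : Ltr → List σ} {u v : List Ltr} (hm : MinCoin g h (u, v))
    (hg : Marked g) : v ≠ [] :=
  hm.swap.fst_ne_nil hg

theorem MinCoin.eq_of_head?_eq {h : Ltr → List σ} (hg : Marked g) (hh : Marked h)
    {u v u' v' : List Ltr} (hm : MinCoin g h (u, v)) (hm' : MinCoin g h (u', v'))
    (hhead : u.head? = u'.head?) : (u, v) = (u', v') := by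
  obtain ⟨p, s, s', rfl, rfl, hdiv⟩ := List.exists_longest_common_prefix u u'
  obtain ⟨q, t, t', rfl, rfl, hdiv'⟩ := List.exists_longest_common_prefix v v'
  have hc : mapp g (p ++ s) = mapp h (q ++ t) := hm.2.1
  have hc' : mapp g (p ++ s') = mapp h (q ++ t') := hm'.2.1
  have hgh : mapp g p <+: mapp h q := hh.isPrefix_mapp_of_common_prefix hdiv'
    (hc ▸ mapp_isPrefix_mapp_append g p s) (hc' ▸ mapp_isPrefix_mapp_append g p s')
  have hhg : mapp h q <+: mapp g p := hg.isPrefix_mapp_of_common_prefix hdiv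
    (hc.symm ▸ mapp_isPrefix_mapp_append h q t) (hc'.symm ▸ mapp_isPrefix_mapp_append h q t')
  have hpq : mapp g p = mapp h q := hgh.eq_of_length (le_antisymm hgh.length_le hhg.length_le)
  have hp : p ≠ [] := by
    rintro rfl
    obtain ⟨rfl, -⟩ := hdiv (by simpa using hhead)
    exact hm.fst_ne_nil hh rfl
  obtain ⟨rfl, rfl⟩ := hm.eq_nil_of_prefix hpq hp
  obtain ⟨rfl, rfl⟩ := hm'.eq_nil_of_prefix hpq hp
  rfl

end Marked

/-- Successor morphisms of a marked pair with two blocks are marked, and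
every element of `E(g,h)` lifts uniquely through them. -/
theorem stmt_14 {σ : Type*} (g h : Ltr → List σ) (hg : Marked g) (hh : Marked h)
    (e f e' f' : List Ltr)
    (hmin : {p : List Ltr × List Ltr | MinCoin g h p} = {(e, f), (e', f')})
    (hne : (e, f) ≠ (e', f')) :
    Marked (two e e') ∧ Marked (two f f') ∧
    ∀ w ∈ EqSet g h, ∃! w₁ : List Ltr,
      mapp (two e e') w₁ = w ∧ mapp (two f f') w₁ = w := by
  have hmem : ∀ p, MinCoin g h p ↔ p = (e, f) ∨ p = (e', f') := fun p => by
    simpa using Set.ext_iff.mp hmin p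
  have hef : MinCoin g h (e, f) := (hmem _).2 (Or.inl rfl)
  have hef' : MinCoin g h (e', f') := (hmem _).2 (Or.inr rfl)
  have hE : Marked (two e e') :=
    ⟨hef.fst_ne_nil hh, hef'.fst_ne_nil hh, fun hc => hne (hef.eq_of_head?_eq hg hh hef' hc)⟩
  have hF : Marked (two f f') := ⟨hef.snd_ne_nil hg, hef'.snd_ne_nil hg, fun hc => hne <| by
    simpa using congrArg Prod.swap (hef.swap.eq_of_head?_eq hh hg hef'.swap hc)⟩
  refine ⟨hE, hF, fun w hw => ?_⟩
  have hlift : ∀ p, MinCoin g h p → ∃ x, p = (two e e' x, two f f' x) := fun p hp => by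
    rcases (hmem p).1 hp with rfl | rfl
    exacts [⟨.a, rfl⟩, ⟨.b, rfl⟩]
  obtain ⟨w₁, hw₁⟩ := exists_lift_of_minCoin hlift (w, w) hw
  simp only [Prod.mk.injEq] at hw₁
  exact ⟨w₁, ⟨hw₁.1.symm, hw₁.2.symm⟩,
    fun y hy => hE.injective_mapp (hy.1.trans hw₁.1)⟩
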